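/- Let m >= 4 and r = e_{m-1} + e_m in D_m. If u_1,...,u_n are roots of D_m with (u_i, r) = 1 for all i, pairwise inequivalent under ~_r, and such that u_1,...,u_n, r generate D_m as a lattice, then m - 1 <= n <= 2(m-2). -/
import Mathlib


open Matrix

/-- The standard basis vector `e_k` of `ℝ^N`. -/
def e {N : ℕ} (k : Fin N) : Fin N → ℝ := fun j => if j = k then 1 else 0

/-- The root lattice `D_m`: integer vectors in `ℝ^m` with even coordinate sum. -/
def Dlat (m : ℕ) : Submodule ℤ (Fin m → ℝ) where
  carrier := {v | (∀ i, ∃ z : ℤ, v i = (z : ℝ)) ∧ ∃ k : ℤ, ∑ i, v i = 2 * (k : ℝ)}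
  add_mem' := by
    rintro a b ⟨ha1, k, ha2⟩ ⟨hb1, l, hb2⟩
    refine ⟨fun i => ?_, k + l, ?_⟩
    · obtain ⟨z, hz⟩ := ha1 i
      obtain ⟨w, hw⟩ := hb1 i
      exact ⟨z + w, by simp [hz, hw]⟩
    · simp only [Pi.add_apply, Finset.sum_add_distrib, ha2, hb2]
      push_cast
      ring
  zero_mem' := ⟨fun i => ⟨0, by simp⟩, 0, by simp⟩
  smul_mem' := by
    rintro c a ⟨ha1, k, ha2⟩
    refine ⟨fun i => ?_, c * k, ?_⟩
    · obtain ⟨z, hz⟩ := ha1 i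
      exact ⟨c * z, by simp [hz, zsmul_eq_mul]⟩
    · show ∑ i, (c • a) i = 2 * ((c * k : ℤ) : ℝ)
      simp only [Pi.smul_apply, zsmul_eq_mul, ← Finset.mul_sum, ha2]
      push_cast
      ring

def IsRootOf {d : ℕ} (L : Submodule ℤ (Fin d → ℝ)) (v : Fin d → ℝ) : Prop :=
  v ∈ L ∧ v ⬝ᵥ v = 2


lemma unit_vec {p : ℕ} (w : Fin p → ℤ) (h : ∑ k, w k ^ 2 = 1) :
    ∃ k, (w k = 1 ∨ w k = -1) ∧ ∀ l, l ≠ k → w l = 0 := by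
  have hk : ∃ k, w k ≠ 0 := by
    by_contra h0
    push_neg at h0
    simp [h0] at h
  obtain ⟨k, hk⟩ := hk
  have hsplit : w k ^ 2 + ∑ l ∈ Finset.univ.erase k, w l ^ 2 = 1 := by
    rw [Finset.add_sum_erase _ (fun l => w l ^ 2) (Finset.mem_univ k)]; exact h
  have hrest : 0 ≤ ∑ l ∈ Finset.univ.erase k, w l ^ 2 :=
    Finset.sum_nonneg fun l _ => sq_nonneg _
  have habs : 1 ≤ |w k| := Int.one_le_abs hk
  have h1 : 1 ≤ w k ^ 2 := by nlinarith [sq_abs (w k)]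
  have hk2 : w k ^ 2 = 1 := by omega
  have hrest0 : ∑ l ∈ Finset.univ.erase k, w l ^ 2 = 0 := by omega
  refine ⟨k, ?_, ?_⟩
  · have h' : (w k - 1) * (w k + 1) = 0 := by linear_combination hk2
    rcases mul_eq_zero.mp h' with h' | h'
    · left; omega
    · right; omega
  · intro l hl
    have := (Finset.sum_eq_zero_iff_of_nonneg (fun l _ => sq_nonneg (w l))).mp hrest0 l
      (Finset.mem_erase.mpr ⟨hl, Finset.mem_univ l⟩)
    exact pow_eq_zero_iff (by norm_num) |>.mp this

/-- Let `r = e_{m-1} + e_m` in `D_m`, `m ≥ 4`. If `u_1, …, u_n` are roots of `D_m`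
with `(u_i, r) = 1`, pairwise inequivalent under `~_r`, and `u_1, …, u_n, r`
generate `D_m` as a lattice, then `m - 1 ≤ n ≤ 2(m-2)`. -/
theorem stmt8 (m n : ℕ) (hm : 4 ≤ m) (r : Fin m → ℝ)
    (hr : r = e ⟨m - 2, by omega⟩ + e ⟨m - 1, by omega⟩)
    (u : Fin n → (Fin m → ℝ))
    (hroot : ∀ i, IsRootOf (Dlat m) (u i))
    (hinner : ∀ i, u i ⬝ᵥ r = 1)
    (hineq : ∀ i j, i ≠ j → u i ≠ u j ∧ u i ≠ r - u j)
    (hspan : Submodule.span ℤ (insert r (Set.range u)) = Dlat m) :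
    m - 1 ≤ n ∧ n ≤ 2 * (m - 2) := by
  classical
  have ha' : m - 2 < m := by omega
  have hb' : m - 1 < m := by omega
  let a : Fin m := ⟨m - 2, ha'⟩
  let b : Fin m := ⟨m - 1, hb'⟩
  have hab : a ≠ b := Fin.ne_of_val_ne (show m - 2 ≠ m - 1 by omega)
  have hr' : r = e a + e b := hr
  have hZex : ∀ i, ∀ k, ∃ z : ℤ, u i k = (z : ℝ) := fun i => (hroot i).1.1
  choose Z hZ using hZex
  -- sum of squares is 2
  have hsum2 : ∀ i, ∑ k, Z i k ^ 2 = 2 := by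
    intro i
    have h2 := (hroot i).2
    have : ((∑ k, Z i k ^ 2 : ℤ) : ℝ) = 2 := by
      push_cast
      rw [← h2]
      apply Finset.sum_congr rfl
      intro k _
      rw [hZ i k]; ring
    exact_mod_cast this
  -- inner products with r
  have hdot : ∀ (v : Fin m → ℝ) (k : Fin m), v ⬝ᵥ e k = v k := by
    intro v k
    simp [dotProduct, e, mul_ite]
  have hab1 : ∀ i, Z i a + Z i b = 1 := by
    intro i
    have h := hinner i
    rw [hr', dotProduct_add, hdot, hdot, hZ i a, hZ i b] at h
    exact_mod_cast h
  -- Z i a ∈ {0, 1}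
  have hsumpair : ∀ i, Z i a ^ 2 + Z i b ^ 2 ≤ 2 := by
    intro i
    have hsub : ({a, b} : Finset (Fin m)) ⊆ Finset.univ := Finset.subset_univ _
    have := Finset.sum_le_sum_of_subset_of_nonneg hsub
      (fun l _ _ => sq_nonneg (Z i l))
    rw [Finset.sum_pair hab, hsum2 i] at this
    exact this
  have hZa : ∀ i, Z i a = 0 ∨ Z i a = 1 := by
    intro i
    have h1 := hab1 i
    have h2 := hsumpair i
    have h3 : Z i a * (Z i a - 1) < 1 := by nlinarith
    have h4 : Z i a * (Z i a - 1) ≤ 0 := by linarith [Int.lt_iff_add_one_le.mp h3]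
    rcases mul_nonpos_iff.mp h4 with ⟨h5, h6⟩ | ⟨h5, h6⟩ <;> omega
  have hZb : ∀ i, Z i b = 1 - Z i a := fun i => by have := hab1 i; omega
  -- the embedding of Fin (m-2)
  have hle2 : m - 2 ≤ m := by omega
  let ι : Fin (m - 2) → Fin m := Fin.castLE hle2
  have hιinj : Function.Injective ι := Fin.castLE_injective hle2
  have hιa : ∀ k : Fin (m - 2), ι k ≠ a := by
    intro k
    have := k.isLt
    exact Fin.ne_of_val_ne (show (k : ℕ) ≠ m - 2 by omega)
  have hιb : ∀ k : Fin (m - 2), ι k ≠ b := by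
    intro k
    have := k.isLt
    exact Fin.ne_of_val_ne (show (k : ℕ) ≠ m - 1 by omega)
  have hcases : ∀ l : Fin m, l = a ∨ l = b ∨ ∃ k : Fin (m - 2), l = ι k := by
    intro l
    by_cases h1 : (l : ℕ) = m - 2
    · left; simp only [a, Fin.ext_iff]; exact h1
    by_cases h2 : (l : ℕ) = m - 1
    · right; left; simp only [b, Fin.ext_iff]; exact h2
    · right; right
      have := l.isLt
      refine ⟨⟨(l : ℕ), by omega⟩, ?_⟩
      simp [ι, Fin.ext_iff]
  have hmap : (Finset.univ : Finset (Fin (m - 2))).map ⟨ι, hιinj⟩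
      = Finset.univ \ {a, b} := by
    ext l
    simp only [Finset.mem_map, Finset.mem_univ, true_and, Finset.mem_sdiff,
      Finset.mem_insert, Finset.mem_singleton, Function.Embedding.coeFn_mk]
    constructor
    · rintro ⟨k, rfl⟩
      push_neg
      exact ⟨hιa k, hιb k⟩
    · intro hl
      push_neg at hl
      rcases hcases l with h | h | ⟨k, rfl⟩
      · exact absurd h hl.1
      · exact absurd h hl.2
      · exact ⟨k, rfl⟩
  have hrest : ∀ i, ∑ k : Fin (m - 2), Z i (ι k) ^ 2 = 1 := by
    intro i
    have h := hsum2 i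
    rw [← Finset.sum_sdiff (Finset.subset_univ ({a, b} : Finset (Fin m))),
      Finset.sum_pair hab] at h
    have hone : Z i a ^ 2 + Z i b ^ 2 = 1 := by
      have := hZb i
      rcases hZa i with h' | h' <;> rw [h', this, h'] <;> ring
    have hrem : ∑ l ∈ Finset.univ \ {a, b}, Z i l ^ 2 = 1 := by omega
    rw [← hmap, Finset.sum_map] at hrem
    exact hrem
  -- signed restriction
  let s : Fin n → ℤ := fun i => if Z i a = 1 then 1 else -1
  have hs2 : ∀ i, s i * s i = 1 := by
    intro i
    simp only [s]
    split <;> ring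
  let W : Fin n → Fin (m - 2) → ℤ := fun i k => s i * Z i (ι k)
  have hWsum : ∀ i, ∑ k, W i k ^ 2 = 1 := by
    intro i
    have : ∀ k : Fin (m - 2), W i k ^ 2 = Z i (ι k) ^ 2 := by
      intro k
      have := hs2 i
      simp only [W]
      nlinarith [hs2 i]
    rw [Finset.sum_congr rfl (fun k _ => this k)]
    exact hrest i
  choose K hK1 hK2 using fun i => unit_vec (W i) (hWsum i)
  let G : Fin n → Fin (m - 2) × Bool := fun i => (K i, decide (W i (K i) = 1))
  have hGinj : Function.Injective G := by
    intro i j hij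
    by_contra hne
    obtain ⟨hne1, hne2⟩ := hineq i j hne
    have hKij : K i = K j := congrArg Prod.fst hij
    have hBij : (W i (K i) = 1) ↔ (W j (K j) = 1) := by
      have := congrArg Prod.snd hij
      simpa [G, decide_eq_decide] using this
    have hWij : ∀ l, W i l = W j l := by
      intro l
      by_cases hl : l = K i
      · subst hl
        rcases hK1 i with h1 | h1 <;> rcases hK1 j with h2 | h2
        · rw [h1, hKij, h2]
        · exfalso; rw [h1] at hBij; rw [h2] at hBij; simp at hBij
        · exfalso; rw [h1] at hBij; rw [h2] at hBij; simp at hBij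
        · rw [h1, hKij, h2]
      · rw [hK2 i l hl, hK2 j l (fun h => hl (h.trans hKij.symm))]
    -- two cases
    by_cases hZaij : Z i a = Z j a
    · -- u i = u j
      apply hne1
      have hsame : s i = s j := by simp only [s, hZaij]
      have hZk : ∀ k : Fin (m - 2), Z i (ι k) = Z j (ι k) := by
        intro k
        have h := hWij k
        simp only [W, hsame] at h
        have hs0 : s j ≠ 0 := by
          intro h0
          have h2 := hs2 j
          rw [h0] at h2
          simp at h2
        exact mul_left_cancel₀ hs0 h
      funext l
      rw [hZ i l, hZ j l]
      rcases hcases l with h | h | ⟨k, rfl⟩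
      · subst h; rw [hZaij]
      · subst h; rw [hZb i, hZb j, hZaij]
      · rw [hZk k]
    · -- u i = r - u j
      apply hne2
      have hsum1 : Z i a + Z j a = 1 := by
        rcases hZa i with h1 | h1 <;> rcases hZa j with h2 | h2 <;> omega
      have hZk : ∀ k : Fin (m - 2), Z i (ι k) = - Z j (ι k) := by
        intro k
        have h := hWij k
        simp only [W] at h
        have hsi : s i = - s j := by
          simp only [s]
          rcases hZa i with h1 | h1 <;> rcases hZa j with h2 | h2 <;>
            simp [h1, h2] <;> omega
        have hs0 : s j ≠ 0 := by
          intro h0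
          have h2 := hs2 j
          rw [h0] at h2
          simp at h2
        rw [hsi] at h
        have h' : s j * (- Z i (ι k)) = s j * Z j (ι k) := by linarith
        have := mul_left_cancel₀ hs0 h'
        omega
      have hra : r a = 1 := by
        rw [hr']
        simp [e, hab, Pi.add_apply]
      have hrb : r b = 1 := by
        rw [hr']
        simp [e, Ne.symm hab, Pi.add_apply]
      have hrι : ∀ k : Fin (m - 2), r (ι k) = 0 := by
        intro k
        rw [hr']
        simp [e, hιa k, hιb k, Pi.add_apply]
      funext l
      show u i l = r l - u j l
      rcases hcases l with h | h | ⟨k, rfl⟩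
      · subst h
        rw [hZ i a, hZ j a, hra]
        have : Z i a = 1 - Z j a := by omega
        rw [this]; push_cast; ring
      · subst h
        rw [hZ i b, hZ j b, hrb, hZb i, hZb j]
        have : 1 - Z i a = 1 - (1 - Z j a) := by omega
        rw [this]; push_cast; ring
      · rw [hZ i (ι k), hZ j (ι k), hrι k, hZk k]
        push_cast; ring
  have hupper : n ≤ 2 * (m - 2) := by
    have := Fintype.card_le_of_injective G hGinj
    simpa [mul_comm] using this
  -- lower bound
  have hlower : m - 1 ≤ n := by
    let v : Fin (n + 1) → (Fin m → ℝ) := Fin.cons r u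
    have hrange : Set.range v = insert r (Set.range u) := Fin.range_cons r u
    have hspanR : Submodule.span ℝ (Set.range v) = ⊤ := by
      rw [eq_top_iff, ← (Pi.basisFun ℝ (Fin m)).span_eq, Submodule.span_le]
      rintro x ⟨k, rfl⟩
      have h2 : (fun j => if j = k then (2 : ℝ) else 0) ∈ Dlat m := by
        refine ⟨fun i => ?_, 1, ?_⟩
        · by_cases h : i = k
          · exact ⟨2, by simp [h]⟩
          · exact ⟨0, by simp [h]⟩
        · simp [Finset.sum_ite_eq']
      have h3 : (fun j => if j = k then (2 : ℝ) else 0)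
          ∈ Submodule.span ℝ (Set.range v) := by
        rw [hrange]
        exact Submodule.span_le_restrictScalars ℤ ℝ (insert r (Set.range u))
          (by rw [hspan]; exact h2)
      have h4 := Submodule.smul_mem (Submodule.span ℝ (Set.range v)) (1 / 2 : ℝ) h3
      have heq : Pi.basisFun ℝ (Fin m) k
          = (1 / 2 : ℝ) • (fun j => if j = k then (2 : ℝ) else 0) := by
        ext j
        by_cases h : j = k <;>
          simp [Pi.basisFun_apply, Pi.single_apply, h]
      rw [heq]
      exact h4
    have hcard := finrank_range_le_card (R := ℝ) v
    unfold Set.finrank at hcard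
    rw [hspanR, finrank_top] at hcard
    simp [Module.finrank_pi] at hcard
    omega
  exact ⟨hlower, hupper⟩
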